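/- arXiv:1805.10413 — 3 statements merged into one kernel-verified Lean document; each statement's English description precedes it below -/
import Mathlib

section
/- For any two policies π and π' in a γ-discounted infinite-horizon MDP, the difference in expected discounted cost satisfies J(π) = J(π') + (1/(1-γ)) E_{(s,t)∼d_π} E_{a∼π_s}[A_{π'}(s,a)], where A_{π'} = Q_{π'} − V_{π'} is the advantage function of π'. -/
open Finset

variable {S A : Type*} [Fintype S] [Fintype A]

/-- `stateDist P π p0 t` is the state distribution `d_{π,t}` at time `t` obtained by running
policy `π` in the MDP with transition kernel `P` from initial state distribution `p0`. -/
noncomputable def stateDist (P : S → A → S → ℝ) (π : S → A → ℝ) (p0 : S → ℝ) :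
    ℕ → S → ℝ
  | 0 => p0
  | t + 1 => fun s' => ∑ s, ∑ a, stateDist P π p0 t s * π s a * P s a s'

/-- Expected instantaneous cost at time `t` of running policy `π` starting from state `s`. -/
noncomputable def expCost (P : S → A → S → ℝ) (c : S → A → ℝ) (π : S → A → ℝ) :
    ℕ → S → ℝ
  | 0 => fun s => ∑ a, π s a * c s a
  | t + 1 => fun s => ∑ a, ∑ s', π s a * P s a s' * expCost P c π t s'

/-- The value function `V_π(s) = E_{ρ_π}[∑_t γ^t c(s_t,a_t) | s_0 = s]`. -/
noncomputable def Vfun (γ : ℝ) (P : S → A → S → ℝ) (c : S → A → ℝ) (π : S → A → ℝ)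
    (s : S) : ℝ := ∑' t : ℕ, γ ^ t * expCost P c π t s

/-- The Q-function `Q_π(s,a) = c(s,a) + γ E_{s' ∼ P(·|s,a)}[V_π(s')]`. -/
noncomputable def Qfun (γ : ℝ) (P : S → A → S → ℝ) (c : S → A → ℝ) (π : S → A → ℝ)
    (s : S) (a : A) : ℝ := c s a + γ * ∑ s', P s a s' * Vfun γ P c π s'

/-- The objective `J(π) = E_{ρ_π}[∑_{t=0}^∞ γ^t c(s_t,a_t)] = E_{s₀∼p₀}[V_π(s₀)]`. -/
noncomputable def Jfun (γ : ℝ) (P : S → A → S → ℝ) (c : S → A → ℝ) (π : S → A → ℝ)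
    (p0 : S → ℝ) : ℝ := ∑ s, p0 s * Vfun γ P c π s

/-!
For any potential `V : S → ℝ` put `F t = γ ^ t * E_{d_t}[V]`, where `d_t` is the state distribution
of `π`. Since `d_{t+1}` is `d_t` pushed through one step of `π`, the discounted expected Bellman
residual `γ ^ t * E_{d_t}[E_{a ∼ π_s}[c + γ P V] - V]` equals
`γ ^ t * E_{d_t}[E_{a ∼ π_s} c] + F (t + 1) - F t`. Summing over `t`, the first terms add up to
`J(π)` and the differences telescope to `-F 0 = -E_{p₀}[V]`. For `V = V_{π'}` the residual is the
`π`-average of the advantage `Q_{π'} - V_{π'}`.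
-/
lemma abs_sum_mul_le_of_sum_eq_one {ι : Type*} [Fintype ι] {w f : ι → ℝ} {K : ℝ}
    (hw : ∀ i, 0 ≤ w i) (hw1 : ∑ i, w i = 1) (hf : ∀ i, |f i| ≤ K) :
    |∑ i, w i * f i| ≤ K :=
  calc |∑ i, w i * f i| ≤ ∑ i, w i * K :=
        (abs_sum_le_sum_abs _ _).trans <| sum_le_sum fun i _ => by
          rw [abs_mul, abs_of_nonneg (hw i)]
          exact mul_le_mul_of_nonneg_left (hf i) (hw i)
  _ = K := by rw [← sum_mul, hw1, one_mul]

lemma summable_geometric_mul_of_abs_le {γ : ℝ} (hγ0 : 0 ≤ γ) (hγ1 : γ < 1) {f : ℕ → ℝ} {K : ℝ}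
    (hf : ∀ t, |f t| ≤ K) : Summable fun t => γ ^ t * f t := by
  refine ((summable_geometric_of_lt_one hγ0 hγ1).mul_right K).of_norm_bounded fun t => ?_
  rw [Real.norm_eq_abs, abs_mul, abs_of_nonneg (pow_nonneg hγ0 t)]
  exact mul_le_mul_of_nonneg_left (hf t) (pow_nonneg hγ0 t)

section MarkovChain

variable {P : S → A → S → ℝ} {π : S → A → ℝ}

lemma abs_expCost_le (hPpos : ∀ s a s', 0 ≤ P s a s') (hPsum : ∀ s a, ∑ s', P s a s' = 1)
    (hπpos : ∀ s a, 0 ≤ π s a) (hπsum : ∀ s, ∑ a, π s a = 1) (c : S → A → ℝ) (t : ℕ) (s : S) :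
    |expCost P c π t s| ≤ ‖c‖ := by
  induction t generalizing s with
  | zero =>
    refine abs_sum_mul_le_of_sum_eq_one (hπpos s) (hπsum s) fun a => ?_
    exact (norm_le_pi_norm (c s) a).trans (norm_le_pi_norm c s)
  | succ t ih =>
    simp only [expCost, mul_assoc, ← mul_sum]
    exact abs_sum_mul_le_of_sum_eq_one (hπpos s) (hπsum s) fun a =>
      abs_sum_mul_le_of_sum_eq_one (hPpos s a) (hPsum s a) ih

lemma sum_abs_stateDist_le (hPpos : ∀ s a s', 0 ≤ P s a s') (hPsum : ∀ s a, ∑ s', P s a s' = 1)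
    (hπpos : ∀ s a, 0 ≤ π s a) (hπsum : ∀ s, ∑ a, π s a = 1) (p0 : S → ℝ) (t : ℕ) :
    ∑ s, |stateDist P π p0 t s| ≤ ∑ s, |p0 s| := by
  induction t with
  | zero => rfl
  | succ t ih =>
    calc ∑ s', |stateDist P π p0 (t + 1) s'|
        ≤ ∑ s', ∑ s, ∑ a, |stateDist P π p0 t s| * π s a * P s a s' :=
          sum_le_sum fun s' _ => (abs_sum_le_sum_abs _ _).trans <| sum_le_sum fun s _ =>
            (abs_sum_le_sum_abs _ _).trans_eq <| sum_congr rfl fun a _ => by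
              rw [abs_mul, abs_mul, abs_of_nonneg (hπpos s a), abs_of_nonneg (hPpos s a s')]
      _ = ∑ s, |stateDist P π p0 t s| * ∑ a, π s a * ∑ s', P s a s' := by
          rw [sum_comm]
          simp only [mul_sum, mul_assoc]
          exact sum_congr rfl fun s _ => sum_comm
      _ = ∑ s, |stateDist P π p0 t s| := by simp only [hPsum, mul_one, hπsum]
      _ ≤ ∑ s, |p0 s| := ih

lemma abs_sum_stateDist_mul_le (hPpos : ∀ s a s', 0 ≤ P s a s')
    (hPsum : ∀ s a, ∑ s', P s a s' = 1) (hπpos : ∀ s a, 0 ≤ π s a) (hπsum : ∀ s, ∑ a, π s a = 1)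
    (p0 f : S → ℝ) (t : ℕ) :
    |∑ s, stateDist P π p0 t s * f s| ≤ (∑ s, |p0 s|) * ‖f‖ :=
  calc |∑ s, stateDist P π p0 t s * f s| ≤ ∑ s, |stateDist P π p0 t s| * ‖f‖ :=
        (abs_sum_le_sum_abs _ _).trans <| sum_le_sum fun s _ => by
          rw [abs_mul]
          exact mul_le_mul_of_nonneg_left (norm_le_pi_norm f s) (abs_nonneg _)
  _ ≤ (∑ s, |p0 s|) * ‖f‖ := by
      rw [← sum_mul]
      exact mul_le_mul_of_nonneg_right (sum_abs_stateDist_le hPpos hPsum hπpos hπsum p0 t)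
        (norm_nonneg f)

lemma sum_stateDist_succ_mul (p0 f : S → ℝ) (t : ℕ) :
    ∑ s', stateDist P π p0 (t + 1) s' * f s'
      = ∑ s, stateDist P π p0 t s * ∑ a, ∑ s', π s a * P s a s' * f s' := by
  simp only [stateDist, sum_mul, mul_sum]
  rw [sum_comm]
  refine sum_congr rfl fun s _ => ?_
  rw [sum_comm]
  exact sum_congr rfl fun a _ => sum_congr rfl fun s' _ => by ring

lemma sum_stateDist_mul_expCost (c : S → A → ℝ) (p0 : S → ℝ) (k t : ℕ) :
    ∑ s, stateDist P π p0 t s * expCost P c π k s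
      = ∑ s, stateDist P π p0 (t + k) s * expCost P c π 0 s := by
  induction k generalizing t with
  | zero => rfl
  | succ k ih =>
    rw [show t + (k + 1) = t + 1 + k by omega, ← ih, sum_stateDist_succ_mul]
    rfl

end MarkovChain

section Discounted

variable {γ : ℝ} {P : S → A → S → ℝ} {π : S → A → ℝ}

lemma Jfun_eq_tsum_sum_stateDist_mul (hγ0 : 0 ≤ γ) (hγ1 : γ < 1)
    (hPpos : ∀ s a s', 0 ≤ P s a s') (hPsum : ∀ s a, ∑ s', P s a s' = 1)
    (hπpos : ∀ s a, 0 ≤ π s a) (hπsum : ∀ s, ∑ a, π s a = 1) (c : S → A → ℝ) (p0 : S → ℝ) :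
    Jfun γ P c π p0 = ∑' t, γ ^ t * ∑ s, stateDist P π p0 t s * expCost P c π 0 s := by
  have hsum (s : S) : Summable fun t => γ ^ t * expCost P c π t s :=
    summable_geometric_mul_of_abs_le hγ0 hγ1 fun t => abs_expCost_le hPpos hPsum hπpos hπsum c t s
  calc Jfun γ P c π p0 = ∑ s, ∑' t, p0 s * (γ ^ t * expCost P c π t s) := by
        simp only [Jfun, Vfun, tsum_mul_left]
  _ = ∑' t, ∑ s, p0 s * (γ ^ t * expCost P c π t s) :=
        (Summable.tsum_finsetSum fun s _ => (hsum s).mul_left _).symm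
  _ = ∑' t, γ ^ t * ∑ s, stateDist P π p0 t s * expCost P c π 0 s := by
        refine tsum_congr fun t => ?_
        have h := sum_stateDist_mul_expCost (P := P) (π := π) c p0 t 0
        rw [zero_add] at h
        rw [← h, mul_sum]
        exact sum_congr rfl fun s _ => by simp only [stateDist]; ring

lemma sum_stateDist_mul_bellman_residual (hπsum : ∀ s, ∑ a, π s a = 1) (c : S → A → ℝ)
    (p0 V : S → ℝ) (t : ℕ) :
    ∑ s, stateDist P π p0 t s * ∑ a, π s a * (c s a + γ * ∑ s', P s a s' * V s' - V s)
      = ∑ s, stateDist P π p0 t s * expCost P c π 0 s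
        + γ * ∑ s, stateDist P π p0 (t + 1) s * V s - ∑ s, stateDist P π p0 t s * V s := by
  have hres (s : S) : ∑ a, π s a * (c s a + γ * ∑ s', P s a s' * V s' - V s)
      = expCost P c π 0 s + γ * ∑ a, ∑ s', π s a * P s a s' * V s' - V s := by
    simp only [expCost, mul_sub, mul_add, sum_sub_distrib, sum_add_distrib, ← sum_mul, hπsum,
      one_mul, mul_sum]
    congr 2
    exact sum_congr rfl fun a _ => sum_congr rfl fun s' _ => by ring
  rw [sum_stateDist_succ_mul, mul_sum, ← sum_add_distrib, ← sum_sub_distrib]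
  exact sum_congr rfl fun s _ => by rw [hres]; ring

theorem Jfun_eq_sum_add_tsum_bellman_residual (hγ0 : 0 ≤ γ) (hγ1 : γ < 1)
    (hPpos : ∀ s a s', 0 ≤ P s a s') (hPsum : ∀ s a, ∑ s', P s a s' = 1)
    (hπpos : ∀ s a, 0 ≤ π s a) (hπsum : ∀ s, ∑ a, π s a = 1) (c : S → A → ℝ) (p0 V : S → ℝ) :
    Jfun γ P c π p0 = ∑ s, p0 s * V s + ∑' t, γ ^ t *
      ∑ s, stateDist P π p0 t s * ∑ a, π s a * (c s a + γ * ∑ s', P s a s' * V s' - V s) := by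
  set u : ℕ → ℝ := fun t => γ ^ t * ∑ s, stateDist P π p0 t s * expCost P c π 0 s
  set F : ℕ → ℝ := fun t => γ ^ t * ∑ s, stateDist P π p0 t s * V s
  have hu : Summable u := summable_geometric_mul_of_abs_le hγ0 hγ1
    (abs_sum_stateDist_mul_le hPpos hPsum hπpos hπsum p0 _)
  have hF : Summable F := summable_geometric_mul_of_abs_le hγ0 hγ1
    (abs_sum_stateDist_mul_le hPpos hPsum hπpos hπsum p0 V)
  have hF1 : Summable fun t => F (t + 1) := (summable_nat_add_iff 1).mpr hF
  have hstep (t : ℕ) : γ ^ t * ∑ s, stateDist P π p0 t s *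
      ∑ a, π s a * (c s a + γ * ∑ s', P s a s' * V s' - V s) = u t + (F (t + 1) - F t) := by
    rw [sum_stateDist_mul_bellman_residual hπsum]
    simp only [u, F, pow_succ]
    ring
  -- the differences telescope because `∑' t, F t = F 0 + ∑' t, F (t + 1)`
  rw [tsum_congr hstep, hu.tsum_add (hF1.sub hF), hF1.tsum_sub hF, hF.tsum_eq_zero_add,
    Jfun_eq_tsum_sum_stateDist_mul hγ0 hγ1 hPpos hPsum hπpos hπsum]
  simp only [F, pow_zero, one_mul, stateDist]
  ring

end Discounted

theorem performance_difference_lemma_general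
    (γ : ℝ) (hγ0 : 0 < γ) (hγ1 : γ < 1)
    (P : S → A → S → ℝ) (hPpos : ∀ s a s', 0 ≤ P s a s')
    (hPsum : ∀ s a, ∑ s', P s a s' = 1)
    (c : S → A → ℝ) (p0 : S → ℝ)
    (π π' : S → A → ℝ)
    (hπpos : ∀ s a, 0 ≤ π s a) (hπsum : ∀ s, ∑ a, π s a = 1) :
    Jfun γ P c π p0 = Jfun γ P c π' p0 + 1 / (1 - γ) *
      ∑' t : ℕ, ∑ s, ((1 - γ) * γ ^ t * stateDist P π p0 t s) *
        ∑ a, π s a * (Qfun γ P c π' s a - Vfun γ P c π' s) := by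
  have hdiscount (t : ℕ) :
      ∑ s, ((1 - γ) * γ ^ t * stateDist P π p0 t s) *
        ∑ a, π s a * (Qfun γ P c π' s a - Vfun γ P c π' s)
      = (1 - γ) * (γ ^ t * ∑ s, stateDist P π p0 t s *
        ∑ a, π s a * (Qfun γ P c π' s a - Vfun γ P c π' s)) := by
    simp only [mul_sum, mul_assoc]
  rw [tsum_congr hdiscount, tsum_mul_left, ← mul_assoc, one_div_mul_cancel (by linarith), one_mul]
  exact Jfun_eq_sum_add_tsum_bellman_residual hγ0.le hγ1 hPpos hPsum hπpos hπsum c p0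
    (Vfun γ P c π')

/-- Performance difference lemma (Kakade & Langford, 2002): for any two policies `π, π'` in a
`γ`-discounted MDP, `J(π) = J(π') + (1/(1−γ)) E_{(s,t)∼d_π} E_{a∼π_s}[A_{π'}(s,a)]`, where
`A_{π'} = Q_{π'} − V_{π'}` and `d_π(s,t) = (1−γ) γ^t d_{π,t}(s)`. -/
theorem performance_difference_lemma
    (γ : ℝ) (hγ0 : 0 < γ) (hγ1 : γ < 1)
    (P : S → A → S → ℝ) (hPpos : ∀ s a s', 0 ≤ P s a s')
    (hPsum : ∀ s a, ∑ s', P s a s' = 1)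
    (c : S → A → ℝ) (p0 : S → ℝ) (hp0pos : ∀ s, 0 ≤ p0 s) (hp0sum : ∑ s, p0 s = 1)
    (π π' : S → A → ℝ)
    (hπpos : ∀ s a, 0 ≤ π s a) (hπsum : ∀ s, ∑ a, π s a = 1)
    (hπ'pos : ∀ s a, 0 ≤ π' s a) (hπ'sum : ∀ s, ∑ a, π' s a = 1) :
    Jfun γ P c π p0 = Jfun γ P c π' p0 + 1 / (1 - γ) *
      ∑' t : ℕ, ∑ s, ((1 - γ) * γ ^ t * stateDist P π p0 t s) *
        ∑ a, π s a * (Qfun γ P c π' s a - Vfun γ P c π' s) :=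
  performance_difference_lemma_general γ hγ0 hγ1 P hPpos hPsum c p0 π π' hπpos hπsum
end

section
/- Let d ≥ 1 be real and N_m, N_M be positive integers with N_M ≥ 2N_m ≥ 2. Then (d+1) Σ_{n=N_m}^{N_M} n^{d−1} / (Σ_{n=N_m}^{N_M} n^d) ≤ (16d/(3 N_M)) · exp(d/N_M). -/
/-!
Tangent lines of the convex functions `t ↦ t ^ d` and `t ↦ t ^ (d + 1)` give the telescoping bounds
`d n ^ (d - 1) ≤ (n + 1) ^ d - n ^ d` and `n ^ (d + 1) - (n - 1) ^ (d + 1) ≤ (d + 1) n ^ d`. Hence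
`d ∑ n ^ (d - 1) ≤ (N_M + 1) ^ d ≤ N_M ^ d exp (d / N_M)`, while
`(d + 1) ∑ n ^ d ≥ N_M ^ (d + 1) - N_m ^ (d + 1) ≥ (3 / 4) N_M ^ (d + 1)` because `N_m ≤ N_M / 2`.
The resulting bound `4 (d + 1) ^ 2 exp (d / N_M) / (3 d N_M)` is at most the claimed one since
`d + 1 ≤ 2 d`.
-/

open Finset Real

theorem rpow_add_mul_rpow_sub_one_mul_le_rpow_add {x h p : ℝ} (hx : 0 < x) (hh : -x ≤ h)
    (hp : 1 ≤ p) : x ^ p + p * x ^ (p - 1) * h ≤ (x + h) ^ p := by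
  have hhx : -1 ≤ h / x := by rwa [le_div_iff₀ hx, neg_one_mul]
  calc x ^ p + p * x ^ (p - 1) * h = x ^ p * (1 + p * (h / x)) := by
        rw [rpow_sub_one hx.ne']; field_simp
    _ ≤ x ^ p * (1 + h / x) ^ p :=
        mul_le_mul_of_nonneg_left (one_add_mul_self_le_rpow_one_add hhx hp) (by positivity)
    _ = (x + h) ^ p := by
        rw [← mul_rpow hx.le (by linarith), mul_add, mul_one, mul_div_cancel₀ _ hx.ne']

theorem mul_sum_Icc_rpow_sub_one_le {a b : ℕ} (ha : 0 < a) (hab : a ≤ b) {p : ℝ} (hp : 1 ≤ p) :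
    p * ∑ n ∈ Icc a b, (n : ℝ) ^ (p - 1) ≤ ((b : ℝ) + 1) ^ p - (a : ℝ) ^ p := by
  have htangent : ∀ n ∈ Icc a b, p * (n : ℝ) ^ (p - 1) ≤ ((n + 1 : ℕ) : ℝ) ^ p - (n : ℝ) ^ p := by
    intro n hn
    have hn : (0 : ℝ) < n := Nat.cast_pos.2 (ha.trans_le (mem_Icc.1 hn).1)
    have := rpow_add_mul_rpow_sub_one_mul_le_rpow_add hn (by linarith : -(n : ℝ) ≤ 1) hp
    push_cast
    linarith
  calc p * ∑ n ∈ Icc a b, (n : ℝ) ^ (p - 1)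
      ≤ ∑ n ∈ Icc a b, (((n + 1 : ℕ) : ℝ) ^ p - (n : ℝ) ^ p) := by
        rw [mul_sum]; exact sum_le_sum htangent
    _ = ((b : ℝ) + 1) ^ p - (a : ℝ) ^ p := by
        rw [sum_Icc_sub hab (fun n : ℕ ↦ (n : ℝ) ^ p)]; push_cast; rfl

theorem rpow_sub_rpow_le_mul_sum_Icc_rpow {a b : ℕ} (ha : 1 ≤ a) (hab : a ≤ b) {p : ℝ}
    (hp : 0 ≤ p) :
    (b : ℝ) ^ (p + 1) - (a : ℝ) ^ (p + 1) ≤ (p + 1) * ∑ n ∈ Icc a b, (n : ℝ) ^ p := by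
  have htangent : ∀ n ∈ Icc a b,
      (n : ℝ) ^ (p + 1) - ((n : ℝ) - 1) ^ (p + 1) ≤ (p + 1) * (n : ℝ) ^ p := by
    intro n hn
    have hn1 : (1 : ℝ) ≤ n := by exact_mod_cast ha.trans (mem_Icc.1 hn).1
    have := rpow_add_mul_rpow_sub_one_mul_le_rpow_add (by linarith : (0 : ℝ) < n)
      (by linarith : -(n : ℝ) ≤ -1) (by linarith : 1 ≤ p + 1)
    rw [add_sub_cancel_right, ← sub_eq_add_neg] at this
    linarith
  have htelescope : ∑ n ∈ Icc a b, ((n : ℝ) ^ (p + 1) - ((n : ℝ) - 1) ^ (p + 1))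
      = (b : ℝ) ^ (p + 1) - ((a : ℝ) - 1) ^ (p + 1) := by
    simpa using sum_Icc_sub hab (fun n : ℕ ↦ ((n : ℝ) - 1) ^ (p + 1))
  calc (b : ℝ) ^ (p + 1) - (a : ℝ) ^ (p + 1) ≤ (b : ℝ) ^ (p + 1) - ((a : ℝ) - 1) ^ (p + 1) := by
        have : (1 : ℝ) ≤ a := by exact_mod_cast ha
        gcongr; linarith
    _ ≤ (p + 1) * ∑ n ∈ Icc a b, (n : ℝ) ^ p := by
        rw [← htelescope, mul_sum]; exact sum_le_sum htangent

theorem add_one_rpow_le_rpow_mul_exp {x p : ℝ} (hx : 0 < x) (hp : 0 ≤ p) :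
    (x + 1) ^ p ≤ x ^ p * exp (p / x) := by
  calc (x + 1) ^ p = (x * (1 + 1 / x)) ^ p := by rw [mul_add, mul_one, mul_one_div_cancel hx.ne']
    _ ≤ (x * exp (1 / x)) ^ p := by
        gcongr
        linarith [add_one_le_exp (1 / x)]
    _ = x ^ p * exp (p / x) := by
        rw [mul_rpow hx.le (exp_pos _).le, ← exp_mul, one_div_mul_eq_div]

theorem four_mul_rpow_le_of_two_mul_le {x y p : ℝ} (hx : 0 ≤ x) (hxy : 2 * x ≤ y) (hp : 2 ≤ p) :
    4 * x ^ p ≤ y ^ p := by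
  have h4 : (4 : ℝ) ≤ 2 ^ p := by
    calc (4 : ℝ) = 2 ^ (2 : ℝ) := by norm_num
      _ ≤ 2 ^ p := rpow_le_rpow_of_exponent_le (by norm_num) hp
  calc 4 * x ^ p ≤ 2 ^ p * x ^ p := by gcongr
    _ = (2 * x) ^ p := (mul_rpow (by norm_num) hx).symm
    _ ≤ y ^ p := by gcongr

/-- For real `d ≥ 1` and positive integers `N_m, N_M` with `N_M ≥ 2 N_m ≥ 2`,
`(d+1) ∑_{n=N_m}^{N_M} n^(d−1) / ∑_{n=N_m}^{N_M} n^d ≤ (16 d / (3 N_M)) exp (d / N_M)`. -/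
theorem weighted_ratio_le (d : ℝ) (hd : 1 ≤ d) (Nm NM : ℕ) (hNm : 1 ≤ Nm)
    (hNM : 2 * Nm ≤ NM) :
    (d + 1) * (∑ n ∈ Finset.Icc Nm NM, (n : ℝ) ^ (d - 1))
        / (∑ n ∈ Finset.Icc Nm NM, (n : ℝ) ^ d)
      ≤ (16 * d / (3 * NM)) * Real.exp (d / NM) := by
  have hab : Nm ≤ NM := by omega
  have hNM0 : (0 : ℝ) < NM := by exact_mod_cast (show 0 < NM by omega)
  set S₁ := ∑ n ∈ Icc Nm NM, (n : ℝ) ^ (d - 1)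
  set S₂ := ∑ n ∈ Icc Nm NM, (n : ℝ) ^ d
  set E := exp (d / NM)
  have hS₁ : d * S₁ ≤ (NM : ℝ) ^ d * E := by
    have hsum := mul_sum_Icc_rpow_sub_one_le (by omega) hab hd
    have hexp := add_one_rpow_le_rpow_mul_exp hNM0 (by linarith : 0 ≤ d)
    have hNm0 : 0 ≤ (Nm : ℝ) ^ d := by positivity
    linarith
  have hS₂ : 3 * ((NM : ℝ) ^ d * NM) ≤ 4 * ((d + 1) * S₂) := by
    have hsum := rpow_sub_rpow_le_mul_sum_Icc_rpow hNm hab (by linarith : 0 ≤ d)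
    have hquarter := four_mul_rpow_le_of_two_mul_le (Nat.cast_nonneg Nm)
      (by exact_mod_cast hNM : 2 * (Nm : ℝ) ≤ NM) (by linarith : 2 ≤ d + 1)
    rw [rpow_add_one hNM0.ne'] at hsum hquarter
    linarith
  have hS₂0 : 0 < S₂ := sum_pos
    (fun n hn ↦ rpow_pos_of_pos (Nat.cast_pos.2 (hNm.trans (mem_Icc.1 hn).1)) d)
    (nonempty_Icc.2 hab)
  rw [div_le_iff₀ hS₂0]
  calc (d + 1) * S₁ ≤ (d + 1) * ((NM : ℝ) ^ d * E / d) := by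
        gcongr; rw [le_div_iff₀ (by linarith)]; linarith
    _ ≤ 16 * d / (3 * NM) * E * (3 * ((NM : ℝ) ^ d * NM) / (4 * (d + 1))) := by
        have hsq : (d + 1) ^ 2 ≤ 4 * d ^ 2 := by nlinarith
        field_simp
        nlinarith [exp_pos (d / NM)]
    _ ≤ 16 * d / (3 * NM) * E * S₂ := by
        gcongr; rw [div_le_iff₀ (by linarith)]; linarith
end

section
/- For two policies π, π_n and expert π* in a γ-discounted MDP, the policy gradient decomposes as E_{d_{π_n}}(∇_θ E_π)[A_{π_n}]|_{π=π_n} = (∇_θ E_{d_π})E_{π_n}[A_{π*}]|_{π=π_n} + E_{d_{π_n}}(∇_θ E_π)[A_{π*}]|_{π=π_n}; i.e., the AggreVaTeD imitation gradient (second term) differs from the true policy gradient by the term arising from differentiating the state distribution against the expert advantage. -/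
/-!
Both sides of the performance difference identity `hPDL` are functions of `θ` of the form
`θ ↦ E_{d_θ} E_{π_θ}[w]`, whose gradient at `θn` is, by the product rule,
`E_{d_{π_n}}(∇_θ E_π)[w] + (∇_θ E_{d_π}) E_{π_n}[w]`. For `w = A_{π_n}` the second term vanishes
since `E_{π_n}[A_{π_n}] = 0`, and the constant `C` contributes nothing, so uniqueness of the
gradient yields the decomposition.
-/

open Finset

section Gradient

variable {F : Type*} [NormedAddCommGroup F] [InnerProductSpace ℝ F] [CompleteSpace F]
  {f g : F → ℝ} {f' g' x : F}

theorem HasGradientAt.mul (hf : HasGradientAt f f' x) (hg : HasGradientAt g g' x) :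
    HasGradientAt (fun y => f y * g y) (f x • g' + g x • f') x := by
  rw [hasGradientAt_iff_hasFDerivAt, map_add, map_smul, map_smul]
  exact hf.hasFDerivAt.mul hg.hasFDerivAt

theorem HasGradientAt.const_add (c : ℝ) (hf : HasGradientAt f f' x) :
    HasGradientAt (fun y => c + f y) f' x :=
  hasGradientAt_iff_hasFDerivAt.2 (hf.hasFDerivAt.const_add c)

theorem HasGradientAt.fun_sum {ι : Type*} {u : Finset ι} {h : ι → F → ℝ} {h' : ι → F}
    (hh : ∀ i ∈ u, HasGradientAt (h i) (h' i) x) :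
    HasGradientAt (fun y => ∑ i ∈ u, h i y) (∑ i ∈ u, h' i) x := by
  rw [hasGradientAt_iff_hasFDerivAt, map_sum]
  exact HasFDerivAt.fun_sum fun i hi => (hh i hi).hasFDerivAt

theorem hasGradientAt_sum_mul_sum {S A : Type*} [Fintype S] [Fintype A]
    {D : F → S → ℝ} {D' : S → F} {p : F → S → A → ℝ} {p' : S → A → F}
    (hD : ∀ s, HasGradientAt (fun θ => D θ s) (D' s) x)
    (hp : ∀ s a, HasGradientAt (fun θ => p θ s a) (p' s a) x) (w : S → A → ℝ) :
    HasGradientAt (fun θ => ∑ s, D θ s * ∑ a, p θ s a * w s a)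
      (∑ s, (D x s • ∑ a, w s a • p' s a + (∑ a, p x s a * w s a) • D' s)) x := by
  refine HasGradientAt.fun_sum fun s _ => (hD s).mul ?_
  refine HasGradientAt.fun_sum fun a _ => ?_
  simpa only [mul_comm, smul_zero, add_zero] using (hasGradientAt_const x (w s a)).mul (hp s a)

end Gradient

/-- Decomposition of the policy gradient (end of Section 4.2 of the paper). With `D θ` the
discounted state(-time) distribution of the parametrized policy `p θ`, `An = A_{π_n}` and
`Astar = A_{π*}` the advantage functions of `π_n` and of the expert, the performance difference
lemma gives `∑_s D θ s ∑_a p θ s a An(s,a) = C + ∑_s D θ s ∑_a p θ s a Astar(s,a)` for a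
constant `C`, and `E_{π_n}[A_{π_n}(s,·)] = 0`. Then the policy gradient
`E_{d_{π_n}}(∇_θ E_π)[A_{π_n}]` equals
`(∇_θ E_{d_π})E_{π_n}[A_{π*}] + E_{d_{π_n}}(∇_θ E_π)[A_{π*}]` at `π = π_n`: the AggreVaTeD
imitation gradient (second term) differs from the true policy gradient by the term arising from
differentiating the state distribution against the expert advantage. -/
theorem policy_gradient_aggrevated_decomposition
    {E S A : Type*} [NormedAddCommGroup E] [InnerProductSpace ℝ E] [CompleteSpace E]
    [Fintype S] [Fintype A]
    (D : E → S → ℝ) (D' : S → E) (p : E → S → A → ℝ) (p' : S → A → E)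
    (An Astar : S → A → ℝ) (θn : E) (C : ℝ)
    (hD : ∀ s, HasGradientAt (fun θ => D θ s) (D' s) θn)
    (hp : ∀ s a, HasGradientAt (fun θ => p θ s a) (p' s a) θn)
    (hzero : ∀ s, ∑ a, p θn s a * An s a = 0)
    (hPDL : ∀ θ, ∑ s, D θ s * ∑ a, p θ s a * An s a
      = C + ∑ s, D θ s * ∑ a, p θ s a * Astar s a) :
    ∑ s, D θn s • ∑ a, An s a • p' s a
      = ∑ s, (∑ a, p θn s a * Astar s a) • D' s
        + ∑ s, D θn s • ∑ a, Astar s a • p' s a := by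
  have hgradAn := hasGradientAt_sum_mul_sum hD hp An
  have hgradAstar := (hasGradientAt_sum_mul_sum hD hp Astar).const_add C
  rw [funext hPDL] at hgradAn
  have hgrad_eq := hgradAn.unique hgradAstar
  simp only [hzero, zero_smul, add_zero, sum_add_distrib] at hgrad_eq
  rw [hgrad_eq, add_comm]
end
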